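/- arXiv:1606.03790 — 2 statements merged into one kernel-verified Lean document; each statement's English description precedes it below -/
import Mathlib

section
/- For every integer n ≥ 2, the arrangement graph A_{n,n−1} is isomorphic to the n-dimensional star graph S_n. -/
/-- A vertex of the arrangement graph `A_{n,k}`: a `k`-tuple of pairwise
distinct elements of `⟨n⟩ = {1, …, n}` (modelled as `Fin n`). -/
def AVertex (n k : ℕ) : Type := {f : Fin k → Fin n // Function.Injective f}

/-- The arrangement graph `A_{n,k}`: two tuples are adjacent iff they differ
in exactly one position. -/
def ArrangementGraph (n k : ℕ) : SimpleGraph (AVertex n k) where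
  Adj u v := ∃! i : Fin k, u.1 i ≠ v.1 i
  symm := by
    constructor
    rintro u v ⟨i, hi, huniq⟩
    exact ⟨i, Ne.symm hi, fun j hj => huniq j (Ne.symm hj)⟩
  loopless := by
    constructor
    rintro u ⟨i, hi, -⟩
    exact hi rfl

/-- The `n`-dimensional star graph `S_n`: vertices are the permutations of
`⟨n⟩` (a permutation `u` is read as the tuple `u 0, u 1, …`), and two
permutations are adjacent iff one is obtained from the other by transposing
the first symbol with the symbol in some other position. -/
def StarGraph (n : ℕ) : SimpleGraph (Equiv.Perm (Fin n)) where
  Adj u v := u ≠ v ∧ ∃ (h : 0 < n) (i : Fin n), v = (Equiv.swap ⟨0, h⟩ i).trans u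
  symm := by
    constructor
    rintro u v ⟨hne, h, i, rfl⟩
    refine ⟨hne.symm, h, i, ?_⟩
    ext x
    simp [Equiv.swap_apply_self]
  loopless := by
    constructor
    rintro u ⟨hne, -⟩
    exact hne rfl

/-!
A permutation `u` of `⟨n⟩` is determined by the tuple `u 2, …, u n`, since `u 1` is the one
symbol missing from it; every injective `(n - 1)`-tuple arises this way by counting. Two such
tuples `u, v` differ in exactly one position iff `w = u⁻¹ v` moves exactly one point other than
`1`; such a `w` must send that point `x` to `1`, so `w = (1 x)`, which is star adjacency.
-/

open Function

namespace Equiv.Perm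

variable {α : Type*} [DecidableEq α]

theorem eq_of_forall_ne_apply_eq {u v : Perm α} (a : α) (h : ∀ x, x ≠ a → u x = v x) :
    u = v := by
  obtain ⟨y, hy⟩ := v.surjective (u a)
  have hya : y = a := by
    by_contra hya
    exact hya (u.injective ((h y hya).trans hy))
  ext x
  rcases eq_or_ne x a with rfl | hx
  · rw [← hy, hya]
  · exact h x hx

theorem existsUnique_apply_ne_self_iff {a : α} {w : Perm α} :
    (∃! x : {x // x ≠ a}, w x ≠ x) ↔ w ≠ 1 ∧ ∃ x, w = swap a x := by
  constructor
  · rintro ⟨⟨x, hxa⟩, hwx, huniq⟩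
    have hfix : ∀ y, y ≠ a → y ≠ x → w y = y := fun y hya hyx =>
      by_contra fun hy => hyx (congrArg Subtype.val (huniq ⟨y, hya⟩ hy))
    have hwxa : w x = a := by
      by_contra hwxa
      exact hwx (w.injective (hfix (w x) hwxa hwx))
    refine ⟨fun h1 => hwx (by rw [h1, one_apply]), x, eq_of_forall_ne_apply_eq a fun y hya => ?_⟩
    rcases eq_or_ne y x with rfl | hyx
    · rw [hwxa, swap_apply_right]
    · rw [hfix y hya hyx, swap_apply_of_ne_of_ne hya hyx]
  · rintro ⟨h1, x, rfl⟩
    have hxa : x ≠ a := by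
      rintro rfl
      exact h1 (swap_self x)
    refine ⟨⟨x, hxa⟩, ?_, fun y hy => Subtype.ext ?_⟩
    · simpa only [swap_apply_right] using hxa.symm
    · exact ((swap_apply_ne_self_iff.mp hy).2.resolve_left y.2)

variable {ι : Type*} {a : α} (e : ι ≃ {x // x ≠ a})

def restrictCompl (u : Perm α) : {f : ι → α // Injective f} :=
  ⟨fun i => u (e i), u.injective.comp (Subtype.val_injective.comp e.injective)⟩

theorem restrictCompl_injective : Injective (restrictCompl e) := by
  intro u v huv
  refine eq_of_forall_ne_apply_eq a fun x hx => ?_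
  simpa [restrictCompl] using congrFun (congrArg Subtype.val huv) (e.symm ⟨x, hx⟩)

theorem restrictCompl_bijective [Finite α] : Bijective (restrictCompl e) := by
  have := Fintype.ofFinite α
  have := Fintype.ofEquiv _ e.symm
  refine (restrictCompl_injective e).bijective_of_nat_card_le ?_
  rw [Nat.card_congr (subtypeInjectiveEquivEmbedding ι α), Nat.card_perm,
    Nat.card_eq_fintype_card, Fintype.card_embedding_eq, Fintype.card_congr e,
    Nat.card_eq_fintype_card]
  simp only [ne_eq, Fintype.card_subtype_compl, Fintype.card_unique]
  exact (Nat.le_mul_of_pos_left _ (Nat.factorial_pos _)).trans_eq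
    (Nat.factorial_mul_descFactorial (Nat.sub_le _ 1))

theorem restrictCompl_adj_iff (u v : Perm α) :
    (∃! i, (restrictCompl e u).1 i ≠ (restrictCompl e v).1 i) ↔
      u ≠ v ∧ ∃ x, v = u * swap a x := by
  have hmoved : ∀ x, u x ≠ v x ↔ (u⁻¹ * v) x ≠ x := fun x => by
    rw [mul_apply, Ne, Ne, inv_eq_iff_eq, eq_comm]
  simp only [restrictCompl, hmoved]
  refine (e.existsUnique_congr_right (q := fun x : {x // x ≠ a} => (u⁻¹ * v) x ≠ x)).trans ?_
  rw [existsUnique_apply_ne_self_iff, Ne, inv_mul_eq_one]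
  simp only [inv_mul_eq_iff_eq_mul]

end Equiv.Perm

noncomputable def starGraphIsoArrangementGraph (m : ℕ) :
    StarGraph (m + 1) ≃g ArrangementGraph (m + 1) m where
  toEquiv := Equiv.ofBijective _ (Equiv.Perm.restrictCompl_bijective (finSuccAboveEquiv 0))
  map_rel_iff' {u v} := by
    change (∃! i, _) ↔ u ≠ v ∧ ∃ (_ : 0 < m + 1) (x : Fin (m + 1)), _
    rw [exists_prop_of_true m.succ_pos]
    exact Equiv.Perm.restrictCompl_adj_iff _ u v

theorem arrangement_iso_star (n : ℕ) (hn : 2 ≤ n) :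
    Nonempty (ArrangementGraph n (n - 1) ≃g StarGraph n) := by
  obtain ⟨m, rfl⟩ : ∃ m, n = m + 1 := ⟨n - 1, by omega⟩
  exact ⟨(starGraphIsoArrangementGraph m).symm⟩
end

section
/- For all integers n and k with 1 ≤ k < n, the arrangement graph A_{n,k} is vertex-transitive and edge-transitive: for any two vertices u, v there is a graph automorphism of A_{n,k} mapping u to v, and for any two edges e, f there is a graph automorphism mapping e to f. -/
/-!
Both symmetric groups act on `A_{n,k}` by automorphisms: `Sym(n)` by relabelling the
entries of a tuple and `Sym(k)` by permuting its positions. The first action is transitive on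
vertices, since any two injections `Fin k → Fin n` differ by a permutation of `Fin n`. An edge
`{u, v}` is a tuple `u` together with a position `i` and a value `b` outside the range of `u`,
with `v = update u i b`. Permuting positions makes the positions of two edges agree, and then a
permutation of `Fin n` extending both `u ↦ x` and `b ↦ c` carries one edge onto the other.
-/

open Function

theorem Equiv.Perm.exists_comp_eq_and_comp_update_eq {α β : Type*} [Finite α] [DecidableEq α]
    {f g : α → β} (hf : Injective f) (hg : Injective g) (a : α) {b c : β}
    (hb : b ∉ Set.range f) (hc : c ∉ Set.range g) :
    ∃ σ : Equiv.Perm β, σ ∘ f = g ∧ σ ∘ update f a b = update g a c := by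
  obtain ⟨σ, hσ⟩ := Equiv.Perm.exists_extending_pair (Option.elim' b f) (Option.elim' c g)
    (Option.injective_iff.2 ⟨hf, hb⟩) (Option.injective_iff.2 ⟨hg, hc⟩)
  have hσf : σ ∘ f = g := funext fun m => hσ (some m)
  exact ⟨σ, hσf, by rw [comp_update, hσf]; exact congrArg _ (hσ none)⟩

namespace ArrangementGraph

variable {n k : ℕ}

def permValues (σ : Equiv.Perm (Fin n)) : ArrangementGraph n k ≃g ArrangementGraph n k where
  toEquiv :=
    { toFun u := ⟨σ ∘ u.1, σ.injective.comp u.2⟩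
      invFun u := ⟨σ.symm ∘ u.1, σ.symm.injective.comp u.2⟩
      left_inv _ := Subtype.ext <| funext fun _ => σ.symm_apply_apply _
      right_inv _ := Subtype.ext <| funext fun _ => σ.apply_symm_apply _ }
  map_rel_iff' := existsUnique_congr fun _ => σ.injective.ne_iff

@[simp]
theorem permValues_apply_coe (σ : Equiv.Perm (Fin n)) (u : AVertex n k) :
    (permValues σ u).1 = σ ∘ u.1 :=
  rfl

def permPositions (τ : Equiv.Perm (Fin k)) : ArrangementGraph n k ≃g ArrangementGraph n k where
  toEquiv :=
    { toFun u := ⟨u.1 ∘ τ, u.2.comp τ.injective⟩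
      invFun u := ⟨u.1 ∘ τ.symm, u.2.comp τ.symm.injective⟩
      left_inv u := Subtype.ext <| funext fun _ => by simp
      right_inv u := Subtype.ext <| funext fun _ => by simp }
  map_rel_iff' {u v} := (τ.bijective.existsUnique_iff (p := fun i => u.1 i ≠ v.1 i)).symm

@[simp]
theorem permPositions_apply_coe (τ : Equiv.Perm (Fin k)) (u : AVertex n k) :
    (permPositions τ u).1 = u.1 ∘ τ :=
  rfl

theorem exists_iso_apply_eq (u v : AVertex n k) :
    ∃ φ : ArrangementGraph n k ≃g ArrangementGraph n k, φ u = v := by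
  obtain ⟨σ, hσ⟩ := Equiv.Perm.exists_extending_pair u.1 v.1 u.2 v.2
  exact ⟨permValues σ, Subtype.ext (funext hσ)⟩

theorem exists_eq_update_of_adj {u v : AVertex n k} (h : (ArrangementGraph n k).Adj u v) :
    ∃ i b, b ∉ Set.range u.1 ∧ v.1 = update u.1 i b := by
  obtain ⟨i, hi, hunique⟩ := h
  have hagree : ∀ m, m ≠ i → u.1 m = v.1 m := fun m hm => by_contra fun h => hm (hunique m h)
  refine ⟨i, v.1 i, ?_, funext fun m => ?_⟩
  · rintro ⟨m, hm⟩
    obtain rfl | hmi := eq_or_ne m i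
    · exact hi hm
    · exact hmi (v.2 ((hagree m hmi).symm.trans hm))
  · obtain rfl | hmi := eq_or_ne m i
    · simp
    · simp [update_of_ne hmi, hagree m hmi]

theorem exists_iso_apply_eq_and_apply_eq_of_adj {u v x y : AVertex n k}
    (huv : (ArrangementGraph n k).Adj u v) (hxy : (ArrangementGraph n k).Adj x y) :
    ∃ φ : ArrangementGraph n k ≃g ArrangementGraph n k, φ u = x ∧ φ v = y := by
  obtain ⟨i, b, hb, hv⟩ := exists_eq_update_of_adj huv
  obtain ⟨j, c, hc, hy⟩ := exists_eq_update_of_adj hxy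
  let τ := Equiv.swap i j
  have hvτ : v.1 ∘ τ = update (u.1 ∘ τ) j b := by
    rw [hv, update_comp_equiv, Equiv.symm_swap, Equiv.swap_apply_left]
  have hbτ : b ∉ Set.range (u.1 ∘ τ) := fun hb' => hb (Set.range_comp_subset_range _ _ hb')
  obtain ⟨σ, hu, hv'⟩ :=
    Equiv.Perm.exists_comp_eq_and_comp_update_eq (u.2.comp τ.injective) x.2 j hbτ hc
  refine ⟨(permPositions τ).trans (permValues σ), Subtype.ext hu, Subtype.ext ?_⟩
  simpa [hvτ, ← hy] using hv'

end ArrangementGraph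

theorem arrangement_vertex_and_edge_transitive_general (n k : ℕ) :
    (∀ u v : AVertex n k,
      ∃ φ : ArrangementGraph n k ≃g ArrangementGraph n k, φ u = v) ∧
    (∀ e ∈ (ArrangementGraph n k).edgeSet, ∀ f ∈ (ArrangementGraph n k).edgeSet,
      ∃ φ : ArrangementGraph n k ≃g ArrangementGraph n k, e.map ⇑φ = f) := by
  refine ⟨ArrangementGraph.exists_iso_apply_eq, ?_⟩
  intro e he f hf
  induction e using Sym2.ind with | _ u v =>
  induction f using Sym2.ind with | _ x y =>
  obtain ⟨φ, hu, hv⟩ := ArrangementGraph.exists_iso_apply_eq_and_apply_eq_of_adj he hf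
  exact ⟨φ, by rw [Sym2.map_mk, hu, hv]⟩

theorem arrangement_vertex_and_edge_transitive (n k : ℕ)
    (hk : 1 ≤ k) (hkn : k < n) :
    (∀ u v : AVertex n k,
      ∃ φ : ArrangementGraph n k ≃g ArrangementGraph n k, φ u = v) ∧
    (∀ e ∈ (ArrangementGraph n k).edgeSet, ∀ f ∈ (ArrangementGraph n k).edgeSet,
      ∃ φ : ArrangementGraph n k ≃g ArrangementGraph n k, e.map ⇑φ = f) :=
  arrangement_vertex_and_edge_transitive_general n k
end
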